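/- arXiv:2510.12883 — 4 statements merged into one kernel-verified Lean document; each statement's English description precedes it below -/
import Mathlib

section
/- Let g = (a b; c d) and g' = (a' b'; c' d') be two matrices in SL₂(F) with a−1, d−1, a'−1, d'−1 ∈ ϖ𝒪, b, b' ∈ 𝒪 and c, c' ∈ ϖ𝒪, and let g'' = gg' = (a'' b''; c'' d''). Then (b'' + c''/ϖ) − (b + c/ϖ) − (b' + c'/ϖ) ∈ ϖ𝒪. Consequently, for any additive character φ : F → ℂˣ that is trivial on ϖ𝒪, the map g ↦ φ(b + c/ϖ) is a group homomorphism from this subgroup to ℂˣ. -/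
/-!
With `f(g) = b + c/ϖ`, multiplying out shows that `f(gg') - f(g) - f(g')` equals
`(a - 1) b' + b (d' - 1) + (c/ϖ)(a' - 1) + (d - 1)(c'/ϖ)`,
and since `c/ϖ ∈ 𝒪`, each summand is an element of `𝒪` times an element of `ϖ𝒪`.
-/

/-- Membership in `ϖ𝒪`. -/
def InPiO {F : Type*} [Field F] (𝒪 : Subring F) (ϖ x : F) : Prop :=
  ∃ y ∈ 𝒪, x = ϖ * y

namespace InPiO

variable {F : Type*} [Field F] {𝒪 : Subring F} {ϖ x y : F}

theorem add (hx : InPiO 𝒪 ϖ x) (hy : InPiO 𝒪 ϖ y) : InPiO 𝒪 ϖ (x + y) := by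
  obtain ⟨u, hu, rfl⟩ := hx
  obtain ⟨v, hv, rfl⟩ := hy
  exact ⟨u + v, 𝒪.add_mem hu hv, by ring⟩

theorem mul_left (hx : x ∈ 𝒪) (hy : InPiO 𝒪 ϖ y) : InPiO 𝒪 ϖ (x * y) := by
  obtain ⟨v, hv, rfl⟩ := hy
  exact ⟨x * v, 𝒪.mul_mem hx hv, by ring⟩

theorem mul_right (hx : InPiO 𝒪 ϖ x) (hy : y ∈ 𝒪) : InPiO 𝒪 ϖ (x * y) :=
  mul_comm y x ▸ mul_left hy hx

theorem div_mem (hϖ : ϖ ≠ 0) (hx : InPiO 𝒪 ϖ x) : x / ϖ ∈ 𝒪 := by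
  obtain ⟨u, hu, rfl⟩ := hx
  rwa [mul_div_cancel_left₀ u hϖ]

end InPiO

section MoyPrasad

variable {F : Type*} [Field F]

/-- The conditions cutting out the Moy–Prasad subgroup `G_{x₂,1/2}` of `SL₂(F)`. -/
def InMoyPrasadHalf (𝒪 : Subring F) (ϖ : F) (M : Matrix (Fin 2) (Fin 2) F) : Prop :=
  InPiO 𝒪 ϖ (M 0 0 - 1) ∧ InPiO 𝒪 ϖ (M 1 1 - 1) ∧ M 0 1 ∈ 𝒪 ∧ InPiO 𝒪 ϖ (M 1 0)

def offDiagSum (ϖ : F) (M : Matrix (Fin 2) (Fin 2) F) : F :=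
  M 0 1 + M 1 0 / ϖ

theorem offDiagSum_mul_sub (ϖ : F) (M N : Matrix (Fin 2) (Fin 2) F) :
    offDiagSum ϖ (M * N) - offDiagSum ϖ M - offDiagSum ϖ N =
      (M 0 0 - 1) * N 0 1 + M 0 1 * (N 1 1 - 1)
        + M 1 0 / ϖ * (N 0 0 - 1) + (M 1 1 - 1) * (N 1 0 / ϖ) := by
  simp only [offDiagSum, Matrix.mul_apply, Fin.sum_univ_two]
  ring

theorem inPiO_offDiagSum_mul_sub {𝒪 : Subring F} {ϖ : F} (hϖ : ϖ ≠ 0)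
    {M N : Matrix (Fin 2) (Fin 2) F}
    (hM : InMoyPrasadHalf 𝒪 ϖ M) (hN : InMoyPrasadHalf 𝒪 ϖ N) :
    InPiO 𝒪 ϖ (offDiagSum ϖ (M * N) - offDiagSum ϖ M - offDiagSum ϖ N) := by
  obtain ⟨ha, hd, hb, hc⟩ := hM
  obtain ⟨ha', hd', hb', hc'⟩ := hN
  rw [offDiagSum_mul_sub]
  exact (((ha.mul_right hb').add (InPiO.mul_left hb hd')).add
    (InPiO.mul_left (hc.div_mem hϖ) ha')).add (hd.mul_right (hc'.div_mem hϖ))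

end MoyPrasad

theorem map_eq_mul_of_map_sub_sub_eq_one {A M : Type*} [AddCommGroup A] [Monoid M]
    {φ : A → M} (hφ : ∀ x y, φ (x + y) = φ x * φ y) {x y z : A}
    (h : φ (z - x - y) = 1) : φ z = φ x * φ y := by
  rw [← sub_add_cancel z (x + y), hφ, ← sub_sub, h, one_mul, hφ]

theorem simple_supercuspidal_character_is_hom_general (F : Type*) [Field F] (𝒪 : Subring F)
    (ϖ : F) (hϖ0 : ϖ ≠ 0)
    (φ : F → ℂˣ) (hφadd : ∀ x y : F, φ (x + y) = φ x * φ y)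
    (hφtriv : ∀ x : F, InPiO 𝒪 ϖ x → φ x = 1)
    (g g' : Matrix.SpecialLinearGroup (Fin 2) F)
    (hg : InPiO 𝒪 ϖ ((g : Matrix (Fin 2) (Fin 2) F) 0 0 - 1) ∧
          InPiO 𝒪 ϖ ((g : Matrix (Fin 2) (Fin 2) F) 1 1 - 1) ∧
          (g : Matrix (Fin 2) (Fin 2) F) 0 1 ∈ 𝒪 ∧
          InPiO 𝒪 ϖ ((g : Matrix (Fin 2) (Fin 2) F) 1 0))
    (hg' : InPiO 𝒪 ϖ ((g' : Matrix (Fin 2) (Fin 2) F) 0 0 - 1) ∧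
          InPiO 𝒪 ϖ ((g' : Matrix (Fin 2) (Fin 2) F) 1 1 - 1) ∧
          (g' : Matrix (Fin 2) (Fin 2) F) 0 1 ∈ 𝒪 ∧
          InPiO 𝒪 ϖ ((g' : Matrix (Fin 2) (Fin 2) F) 1 0)) :
    InPiO 𝒪 ϖ
      (((g * g' : Matrix.SpecialLinearGroup (Fin 2) F) : Matrix (Fin 2) (Fin 2) F) 0 1
          + ((g * g' : Matrix.SpecialLinearGroup (Fin 2) F) : Matrix (Fin 2) (Fin 2) F) 1 0 / ϖ
        - ((g : Matrix (Fin 2) (Fin 2) F) 0 1 + (g : Matrix (Fin 2) (Fin 2) F) 1 0 / ϖ)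
        - ((g' : Matrix (Fin 2) (Fin 2) F) 0 1 + (g' : Matrix (Fin 2) (Fin 2) F) 1 0 / ϖ)) ∧
    φ (((g * g' : Matrix.SpecialLinearGroup (Fin 2) F) : Matrix (Fin 2) (Fin 2) F) 0 1
        + ((g * g' : Matrix.SpecialLinearGroup (Fin 2) F) : Matrix (Fin 2) (Fin 2) F) 1 0 / ϖ)
      = φ ((g : Matrix (Fin 2) (Fin 2) F) 0 1 + (g : Matrix (Fin 2) (Fin 2) F) 1 0 / ϖ)
        * φ ((g' : Matrix (Fin 2) (Fin 2) F) 0 1 + (g' : Matrix (Fin 2) (Fin 2) F) 1 0 / ϖ) := by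
  have hdiff := inPiO_offDiagSum_mul_sub hϖ0 (M := g) (N := g') hg hg'
  rw [Matrix.SpecialLinearGroup.coe_mul]
  exact ⟨hdiff, map_eq_mul_of_map_sub_sub_eq_one hφadd (hφtriv _ hdiff)⟩

/-- For `g, g'` in the Moy–Prasad subgroup `G_{x₂,1/2}` of `SL₂(F)` with product `g''`,
one has `(b'' + c''/ϖ) - (b + c/ϖ) - (b' + c'/ϖ) ∈ ϖ𝒪`; consequently, for any additive
character `φ` trivial on `ϖ𝒪`, the map `g ↦ φ(b + c/ϖ)` is a group homomorphism. -/
theorem simple_supercuspidal_character_is_hom (F : Type*) [Field F] (𝒪 : Subring F)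
    (ϖ : F) (hϖ : ϖ ∈ 𝒪) (hϖ0 : ϖ ≠ 0)
    (φ : F → ℂˣ) (hφadd : ∀ x y : F, φ (x + y) = φ x * φ y)
    (hφtriv : ∀ x : F, InPiO 𝒪 ϖ x → φ x = 1)
    (g g' : Matrix.SpecialLinearGroup (Fin 2) F)
    (hg : InPiO 𝒪 ϖ ((g : Matrix (Fin 2) (Fin 2) F) 0 0 - 1) ∧
          InPiO 𝒪 ϖ ((g : Matrix (Fin 2) (Fin 2) F) 1 1 - 1) ∧
          (g : Matrix (Fin 2) (Fin 2) F) 0 1 ∈ 𝒪 ∧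
          InPiO 𝒪 ϖ ((g : Matrix (Fin 2) (Fin 2) F) 1 0))
    (hg' : InPiO 𝒪 ϖ ((g' : Matrix (Fin 2) (Fin 2) F) 0 0 - 1) ∧
          InPiO 𝒪 ϖ ((g' : Matrix (Fin 2) (Fin 2) F) 1 1 - 1) ∧
          (g' : Matrix (Fin 2) (Fin 2) F) 0 1 ∈ 𝒪 ∧
          InPiO 𝒪 ϖ ((g' : Matrix (Fin 2) (Fin 2) F) 1 0)) :
    InPiO 𝒪 ϖ
      (((g * g' : Matrix.SpecialLinearGroup (Fin 2) F) : Matrix (Fin 2) (Fin 2) F) 0 1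
          + ((g * g' : Matrix.SpecialLinearGroup (Fin 2) F) : Matrix (Fin 2) (Fin 2) F) 1 0 / ϖ
        - ((g : Matrix (Fin 2) (Fin 2) F) 0 1 + (g : Matrix (Fin 2) (Fin 2) F) 1 0 / ϖ)
        - ((g' : Matrix (Fin 2) (Fin 2) F) 0 1 + (g' : Matrix (Fin 2) (Fin 2) F) 1 0 / ϖ)) ∧
    φ (((g * g' : Matrix.SpecialLinearGroup (Fin 2) F) : Matrix (Fin 2) (Fin 2) F) 0 1
        + ((g * g' : Matrix.SpecialLinearGroup (Fin 2) F) : Matrix (Fin 2) (Fin 2) F) 1 0 / ϖ)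
      = φ ((g : Matrix (Fin 2) (Fin 2) F) 0 1 + (g : Matrix (Fin 2) (Fin 2) F) 1 0 / ϖ)
        * φ ((g' : Matrix (Fin 2) (Fin 2) F) 0 1 + (g' : Matrix (Fin 2) (Fin 2) F) 1 0 / ϖ) :=
  simple_supercuspidal_character_is_hom_general F 𝒪 ϖ hϖ0 φ hφadd hφtriv g g' hg hg'
end

section
/- Let G be a group, N a normal subgroup containing the commutator subgroup [G,G], and χ : N → ℂˣ a group homomorphism invariant under conjugation by G, i.e., χ(gng⁻¹) = χ(n) for all g ∈ G, n ∈ N. Then the map B(g,h) := χ(ghg⁻¹h⁻¹) descends to a well-defined map on (G/N) × (G/N), is bimultiplicative (B(g₁g₂, h) = B(g₁,h)B(g₂,h) and B(g, h₁h₂) = B(g,h₁)B(g,h₂)), and is alternating: B(g,g) = 1 and B(g,h) = B(h,g)⁻¹. -/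
/-!
Writing `[g, h]` for the commutator, the identities `[g₁g₂, h] = g₁[g₂, h]g₁⁻¹ · [g₁, h]` and
`[g, h₁h₂] = [g, h₁] · h₁[g, h₂]h₁⁻¹` express a commutator with a product as a product of
`G`-conjugates of commutators, all of which lie in `N`; a `G`-invariant character of `N` does not
see the conjugations, which gives bimultiplicativity. The character is trivial on `[n, h]` and
`[g, n]` for `n ∈ N`, so by bimultiplicativity the pairing only depends on classes modulo `N`.
Finally `[g, g] = 1` and `[g, h]⁻¹ = [h, g]`.
-/

open scoped commutatorElement

structure IsInvariantCharacter {G M : Type*} [Group G] [Group M] (N : Subgroup G) (χ : G → M) :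
    Prop where
  map_mul : ∀ {n m : G}, n ∈ N → m ∈ N → χ (n * m) = χ n * χ m
  map_conj : ∀ (g : G) {n : G}, n ∈ N → χ (g * n * g⁻¹) = χ n

theorem commutatorElement_mem_of_commutator_le {G : Type*} [Group G] {N : Subgroup G}
    (hN : commutator G ≤ N) (g h : G) : ⁅g, h⁆ ∈ N :=
  hN (Subgroup.commutator_mem_commutator (Subgroup.mem_top g) (Subgroup.mem_top h))

namespace IsInvariantCharacter

variable {G M : Type*} [Group G] {N : Subgroup G} {χ : G → M}

section Group

variable [Group M]

theorem map_one (hχ : IsInvariantCharacter N χ) : χ 1 = 1 := by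
  have h := hχ.map_mul N.one_mem N.one_mem
  rwa [one_mul, left_eq_mul] at h

theorem map_inv (hχ : IsInvariantCharacter N χ) {n : G} (hn : n ∈ N) : χ n⁻¹ = (χ n)⁻¹ := by
  refine eq_inv_of_mul_eq_one_right ?_
  rw [← hχ.map_mul hn (N.inv_mem hn), mul_inv_cancel, hχ.map_one]

theorem map_commutatorElement_eq_inv (hχ : IsInvariantCharacter N χ) {g h : G}
    (hmem : ⁅h, g⁆ ∈ N) : χ ⁅g, h⁆ = (χ ⁅h, g⁆)⁻¹ := by
  rw [← commutatorElement_inv, hχ.map_inv hmem]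

theorem map_commutatorElement_of_mem_right [N.Normal] (hχ : IsInvariantCharacter N χ) (g : G)
    {n : G} (hn : n ∈ N) : χ ⁅g, n⁆ = 1 := by
  rw [commutatorElement_def, hχ.map_mul (Subgroup.Normal.conj_mem ‹_› n hn g) (N.inv_mem hn),
    hχ.map_conj g hn, hχ.map_inv hn, mul_inv_cancel]

theorem map_commutatorElement_of_mem_left [N.Normal] (hχ : IsInvariantCharacter N χ) {n : G}
    (hn : n ∈ N) (h : G) : χ ⁅n, h⁆ = 1 := by
  have hmem : ⁅h, n⁆ ∈ N := by
    rw [commutatorElement_def]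
    exact N.mul_mem (Subgroup.Normal.conj_mem ‹_› n hn h) (N.inv_mem hn)
  rw [hχ.map_commutatorElement_eq_inv hmem, hχ.map_commutatorElement_of_mem_right h hn, inv_one]

end Group

variable [CommGroup M] [N.Normal]

theorem map_commutatorElement_mul_left (hχ : IsInvariantCharacter N χ) (hN : commutator G ≤ N)
    (g₁ g₂ h : G) : χ ⁅g₁ * g₂, h⁆ = χ ⁅g₁, h⁆ * χ ⁅g₂, h⁆ := by
  have hmem := commutatorElement_mem_of_commutator_le hN g₂ h
  rw [commutatorElement_mul_left_eq_conj_mul,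
    hχ.map_mul (Subgroup.Normal.conj_mem ‹_› _ hmem g₁)
      (commutatorElement_mem_of_commutator_le hN g₁ h),
    hχ.map_conj g₁ hmem, mul_comm]

theorem map_commutatorElement_mul_right (hχ : IsInvariantCharacter N χ) (hN : commutator G ≤ N)
    (g h₁ h₂ : G) : χ ⁅g, h₁ * h₂⁆ = χ ⁅g, h₁⁆ * χ ⁅g, h₂⁆ := by
  have hmem := commutatorElement_mem_of_commutator_le hN g h₂
  have e : ⁅g, h₁ * h₂⁆ = ⁅g, h₁⁆ * (h₁ * ⁅g, h₂⁆ * h₁⁻¹) := by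
    rw [commutatorElement_mul_right_eq_mul_conj]
    simp only [mul_assoc]
  rw [e, hχ.map_mul (commutatorElement_mem_of_commutator_le hN g h₁)
      (Subgroup.Normal.conj_mem ‹_› _ hmem h₁),
    hχ.map_conj h₁ hmem]

theorem map_commutatorElement_congr (hχ : IsInvariantCharacter N χ) (hN : commutator G ≤ N)
    {g g' h h' : G} (hg : g⁻¹ * g' ∈ N) (hh : h⁻¹ * h' ∈ N) : χ ⁅g, h⁆ = χ ⁅g', h'⁆ := by
  rw [← mul_inv_cancel_left g g', ← mul_inv_cancel_left h h',
    hχ.map_commutatorElement_mul_left hN, hχ.map_commutatorElement_of_mem_left hg, mul_one,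
    hχ.map_commutatorElement_mul_right hN, hχ.map_commutatorElement_of_mem_right g hh, mul_one]

end IsInvariantCharacter

/-- Let `N` be a normal subgroup of `G` containing the commutator subgroup, and `χ` a
`G`-conjugation-invariant character on `N`.  Then `B(g,h) = χ([g,h])` descends to
`(G/N) × (G/N)`, is bimultiplicative, and is alternating. -/
theorem commutator_pairing_symplectic
    (G : Type*) [Group G] (N : Subgroup G) [N.Normal] (hN : commutator G ≤ N)
    (χ : G → ℂˣ)
    (hχmul : ∀ n m : G, n ∈ N → m ∈ N → χ (n * m) = χ n * χ m)
    (hχconj : ∀ (g n : G), n ∈ N → χ (g * n * g⁻¹) = χ n) :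
    (∀ g g' h h' : G, g⁻¹ * g' ∈ N → h⁻¹ * h' ∈ N →
      χ (g * h * g⁻¹ * h⁻¹) = χ (g' * h' * g'⁻¹ * h'⁻¹)) ∧
    (∀ g₁ g₂ h : G,
      χ ((g₁ * g₂) * h * (g₁ * g₂)⁻¹ * h⁻¹) =
        χ (g₁ * h * g₁⁻¹ * h⁻¹) * χ (g₂ * h * g₂⁻¹ * h⁻¹)) ∧
    (∀ g h₁ h₂ : G,
      χ (g * (h₁ * h₂) * g⁻¹ * (h₁ * h₂)⁻¹) =
        χ (g * h₁ * g⁻¹ * h₁⁻¹) * χ (g * h₂ * g⁻¹ * h₂⁻¹)) ∧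
    (∀ g : G, χ (g * g * g⁻¹ * g⁻¹) = 1) ∧
    (∀ g h : G, χ (g * h * g⁻¹ * h⁻¹) = (χ (h * g * h⁻¹ * g⁻¹))⁻¹) := by
  have hχ : IsInvariantCharacter N χ := ⟨hχmul _ _, hχconj⟩
  exact ⟨fun _ _ _ _ hg hh => hχ.map_commutatorElement_congr hN hg hh,
    hχ.map_commutatorElement_mul_left hN,
    hχ.map_commutatorElement_mul_right hN,
    fun g => (congrArg χ (commutatorElement_self g)).trans hχ.map_one,
    fun g h => hχ.map_commutatorElement_eq_inv (commutatorElement_mem_of_commutator_le hN h g)⟩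
end

section
/- Let G be a Hausdorff topological group, p a prime, and suppose γ = s₁u₁ = s₂u₂ where s₁, s₂, u₁, u₂ pairwise commute, s₁ and s₂ have finite order coprime to p, and u₁^{pⁿ} → 1 and u₂^{pⁿ} → 1 as n → ∞. Then s₁ = s₂ and u₁ = u₂. -/
/-- Uniqueness of the topological Jordan decomposition in a Hausdorff topological group:
if `γ = s₁u₁ = s₂u₂` with all four elements pairwise commuting, `s₁, s₂` of finite order
coprime to `p`, and `u₁, u₂` topologically `p`-unipotent, then `s₁ = s₂` and `u₁ = u₂`. -/
theorem topological_jordan_decomposition_unique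
    (G : Type*) [Group G] [TopologicalSpace G] [IsTopologicalGroup G] [T2Space G]
    (p : ℕ) (hp : p.Prime) (s₁ s₂ u₁ u₂ : G)
    (hc1 : Commute s₁ u₁) (hc2 : Commute s₂ u₂) (hc3 : Commute s₁ s₂)
    (hc4 : Commute s₁ u₂) (hc5 : Commute s₂ u₁) (hc6 : Commute u₁ u₂)
    (ho1 : 0 < orderOf s₁) (ho1' : (orderOf s₁).Coprime p)
    (ho2 : 0 < orderOf s₂) (ho2' : (orderOf s₂).Coprime p)
    (hu1 : Filter.Tendsto (fun n : ℕ => u₁ ^ p ^ n) Filter.atTop (nhds 1))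
    (hu2 : Filter.Tendsto (fun n : ℕ => u₂ ^ p ^ n) Filter.atTop (nhds 1))
    (heq : s₁ * u₁ = s₂ * u₂) :
    s₁ = s₂ ∧ u₁ = u₂ := by
  set t : G := s₂⁻¹ * s₁ with ht
  have htu : t = u₂ * u₁⁻¹ := by
    rw [ht, inv_mul_eq_iff_eq_mul, ← mul_assoc, eq_mul_inv_iff_mul_eq]
    exact heq
  -- order of t
  have hcomm : Commute s₂⁻¹ s₁ := hc3.symm.inv_left
  have hdvd : orderOf t ∣ orderOf s₂ * orderOf s₁ := by
    have h1 : orderOf t ∣ Nat.lcm (orderOf s₂⁻¹) (orderOf s₁) := hcomm.orderOf_mul_dvd_lcm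
    rw [orderOf_inv] at h1
    exact h1.trans (Nat.lcm_dvd_mul _ _)
  have hfin : 0 < orderOf t := Nat.pos_of_dvd_of_pos hdvd (Nat.mul_pos ho2 ho1)
  set m : ℕ := orderOf t with hm
  have hmp : m.Coprime p := Nat.Coprime.coprime_dvd_left hdvd (Nat.Coprime.mul ho2' ho1')
  -- t^{p^n} → 1
  have hct : Commute u₂ u₁⁻¹ := hc6.symm.inv_right
  have htn : Filter.Tendsto (fun n : ℕ => t ^ p ^ n) Filter.atTop (nhds 1) := by
    have hfun : (fun n : ℕ => t ^ p ^ n) = fun n => u₂ ^ p ^ n * (u₁ ^ p ^ n)⁻¹ := by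
      funext n
      rw [htu, hct.mul_pow, inv_pow]
    rw [hfun]
    simpa using hu2.mul hu1.inv
  have hpm : Nat.Coprime p m := hmp.symm
  have htot : p ^ m.totient ≡ 1 [MOD m] := Nat.ModEq.pow_totient hpm
  have hsub : Filter.Tendsto (fun k : ℕ => m.totient * k) Filter.atTop Filter.atTop :=
    Filter.Tendsto.const_mul_atTop' (Nat.totient_pos.mpr hfin) Filter.tendsto_id
  have hconst : ∀ k : ℕ, t ^ p ^ (m.totient * k) = t := by
    intro k
    have hmod : p ^ (m.totient * k) ≡ 1 [MOD m] := by
      have := htot.pow k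
      rwa [one_pow, ← pow_mul] at this
    calc t ^ p ^ (m.totient * k) = t ^ 1 := pow_eq_pow_iff_modEq.mpr (by simpa [hm] using hmod)
    _ = t := pow_one t
  have ht1 : t = 1 := by
    have h1 : Filter.Tendsto (fun k : ℕ => t ^ p ^ (m.totient * k)) Filter.atTop (nhds 1) :=
      htn.comp hsub
    have h2 : Filter.Tendsto (fun k : ℕ => t ^ p ^ (m.totient * k)) Filter.atTop (nhds t) := by
      simpa [hconst] using (tendsto_const_nhds : Filter.Tendsto (fun _ : ℕ => t) Filter.atTop (nhds t))
    exact tendsto_nhds_unique h2 h1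
  constructor
  · have h : s₂⁻¹ * s₁ = 1 := by rw [← ht, ht1]
    exact (inv_mul_eq_one.mp h).symm
  · have h : u₂ * u₁⁻¹ = 1 := by rw [← htu, ht1]
    exact (mul_inv_eq_one.mp h).symm
end

section
/- Let G be a finite group, H, K ≤ G subgroups, and (ρ, W) a complex representation of H. Then the restriction to K of the induced representation Ind_H^G ρ decomposes as a direct sum over double cosets: Res_K Ind_H^G ρ ≅ ⊕_{g ∈ K\G/H} Ind_{K ∩ gHg⁻¹}^K (ᵍρ|_{K ∩ gHg⁻¹}), where ᵍρ is the representation of gHg⁻¹ given by ᵍρ(x) = ρ(g⁻¹xg) and the sum runs over a set of representatives g of the double cosets. -/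
/-- The induced representation `Ind_H^G ρ`, realized as the space of functions
`f : G → V` with `f (h * g) = ρ h (f g)` for all `h ∈ H`, on which `G` acts by right
translation. -/
def indSubmodule (G : Type*) [Group G] (H : Subgroup G) {V : Type*} [AddCommGroup V]
    [Module ℂ V] (ρ : Representation ℂ H V) : Submodule ℂ (G → V) where
  carrier := {f | ∀ (h : H) (g : G), f (↑h * g) = ρ h (f g)}
  add_mem' := by
    intro f f' hf hf' h g
    simp only [Pi.add_apply, hf h g, hf' h g, map_add]
  zero_mem' := by
    intro h g
    simp
  smul_mem' := by
    intro c f hf h g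
    simp only [Pi.smul_apply, hf h g, map_smul]

/-- The induced representation `Ind_{K ∩ dHd⁻¹}^K (ᵈρ)`, where `ᵈρ(y) = ρ(d⁻¹yd)`,
realized as the space of functions `f : K → V` with `f (y * k) = ρ (d⁻¹yd) (f k)` for all
`y ∈ K ∩ dHd⁻¹`, on which `K` acts by right translation. -/
def indPiece (G : Type*) [Group G] (K H : Subgroup G) {V : Type*} [AddCommGroup V]
    [Module ℂ V] (ρ : Representation ℂ H V) (d : G) : Submodule ℂ (↥K → V) where
  carrier := {f | ∀ (y k : K) (hy : d⁻¹ * ↑y * d ∈ H),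
    f (y * k) = ρ ⟨d⁻¹ * ↑y * d, hy⟩ (f k)}
  add_mem' := by
    intro f f' hf hf' y k hy
    simp only [Pi.add_apply, hf y k hy, hf' y k hy, map_add]
  zero_mem' := by
    intro y k hy
    simp
  smul_mem' := by
    intro c f hf y k hy
    simp only [Pi.smul_apply, hf y k hy, map_smul]

section MackeyAux

variable {G : Type*} [Group G] {K H : Subgroup G}
  {V : Type*} [AddCommGroup V] [Module ℂ V] {ρ : Representation ℂ H V}

lemma mackey_mem_piece (f : ↥(indSubmodule G H ρ)) (d : G) :
    (fun κ : K => f.1 (d⁻¹ * ↑κ)) ∈ indPiece G K H ρ d := by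
  intro y k hy
  have := f.2 ⟨d⁻¹ * ↑y * d, hy⟩ (d⁻¹ * ↑k)
  simpa [mul_assoc] using this

variable (ρ) in
/-- The map `Ind_H^G ρ → ⊕_d Ind piece`, `f ↦ (κ ↦ f (d⁻¹ κ))`. -/
def mackeyHom (D : Set G) :
    ↥(indSubmodule G H ρ) →ₗ[ℂ] Π d : D, ↥(indPiece G K H ρ (d : G)) where
  toFun f := fun d => ⟨fun κ => f.1 ((d : G)⁻¹ * ↑κ), mackey_mem_piece f (d : G)⟩
  map_add' f g := rfl
  map_smul' c f := by
    funext d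
    apply Subtype.ext
    funext κ
    rfl

lemma mackey_key {D : Set G} (F : Π d : D, ↥(indPiece G K H ρ (d : G)))
    (d : G) (hd : d ∈ D) {k k' h h' : G} (hk : k ∈ K) (hk' : k' ∈ K)
    (hh : h ∈ H) (hh' : h' ∈ H) (heq : k * d * h = k' * d * h') :
    ρ ⟨h⁻¹, inv_mem hh⟩ ((F ⟨d, hd⟩).1 ⟨k⁻¹, inv_mem hk⟩)
      = ρ ⟨h'⁻¹, inv_mem hh'⟩ ((F ⟨d, hd⟩).1 ⟨k'⁻¹, inv_mem hk'⟩) := by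
  have hyd : d⁻¹ * (k'⁻¹ * k) * d = h' * h⁻¹ := by
    have : k = k' * d * h' * h⁻¹ * d⁻¹ := by
      rw [← heq]; group
    rw [this]; group
  have hyH : d⁻¹ * ((⟨k'⁻¹ * k, mul_mem (inv_mem hk') hk⟩ : K) : G) * d ∈ H := by
    simpa [hyd] using mul_mem hh' (inv_mem hh)
  have hFv := (F ⟨d, hd⟩).2 ⟨k'⁻¹ * k, mul_mem (inv_mem hk') hk⟩ ⟨k⁻¹, inv_mem hk⟩ hyH
  have hmul : (⟨k'⁻¹ * k, mul_mem (inv_mem hk') hk⟩ : K) * ⟨k⁻¹, inv_mem hk⟩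
      = ⟨k'⁻¹, inv_mem hk'⟩ := by
    ext; simp [mul_assoc]
  rw [hmul] at hFv
  rw [hFv, ← Module.End.mul_apply, ← map_mul]
  congr 1
  ext
  simp [hyd, mul_assoc]

variable (ρ) in
/-- The inverse map, defined pointwise using the double coset decomposition. -/
noncomputable def mackeyInvAux {D : Set G}
    (hD : ∀ x : G, ∃! d : G, d ∈ D ∧ ∃ k ∈ K, ∃ h ∈ H, x = k * d * h)
    (F : Π d : D, ↥(indPiece G K H ρ (d : G))) (x : G) : V :=
  ρ ⟨((hD x⁻¹).exists.choose_spec.2.choose_spec.2.choose)⁻¹,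
      inv_mem (hD x⁻¹).exists.choose_spec.2.choose_spec.2.choose_spec.1⟩
    ((F ⟨(hD x⁻¹).exists.choose, (hD x⁻¹).exists.choose_spec.1⟩).1
      ⟨((hD x⁻¹).exists.choose_spec.2.choose)⁻¹,
        inv_mem (hD x⁻¹).exists.choose_spec.2.choose_spec.1⟩)

lemma mackeyInvAux_spec {D : Set G}
    (hD : ∀ x : G, ∃! d : G, d ∈ D ∧ ∃ k ∈ K, ∃ h ∈ H, x = k * d * h)
    (F : Π d : D, ↥(indPiece G K H ρ (d : G))) (x : G) (d : G) (hd : d ∈ D)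
    {k h : G} (hk : k ∈ K) (hh : h ∈ H) (heq : x⁻¹ = k * d * h) :
    mackeyInvAux ρ hD F x = ρ ⟨h⁻¹, inv_mem hh⟩ ((F ⟨d, hd⟩).1 ⟨k⁻¹, inv_mem hk⟩) := by
  have hspec := (hD x⁻¹).exists.choose_spec
  have hd0 : (hD x⁻¹).exists.choose = d :=
    (hD x⁻¹).unique hspec ⟨hd, k, hk, h, hh, heq⟩
  subst hd0
  unfold mackeyInvAux
  exact mackey_key F _ (hD x⁻¹).exists.choose_spec.1
    (hD x⁻¹).exists.choose_spec.2.choose_spec.1 hk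
    (hD x⁻¹).exists.choose_spec.2.choose_spec.2.choose_spec.1 hh
    (((hD x⁻¹).exists.choose_spec.2.choose_spec.2.choose_spec.2).symm.trans heq)

lemma mackeyInvAux_mem {D : Set G}
    (hD : ∀ x : G, ∃! d : G, d ∈ D ∧ ∃ k ∈ K, ∃ h ∈ H, x = k * d * h)
    (F : Π d : D, ↥(indPiece G K H ρ (d : G))) :
    mackeyInvAux ρ hD F ∈ indSubmodule G H ρ := by
  intro h0 g
  obtain ⟨d, ⟨hd, k, hk, h, hh, heq⟩, -⟩ := hD g⁻¹
  have heq2 : ((h0 : G) * g)⁻¹ = k * d * (h * (h0 : G)⁻¹) := by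
    rw [mul_inv_rev, heq]; group
  rw [mackeyInvAux_spec hD F _ d hd hk (mul_mem hh (inv_mem h0.2)) heq2,
    mackeyInvAux_spec hD F _ d hd hk hh heq]
  have hmm : (⟨(h * (h0 : G)⁻¹)⁻¹, inv_mem (mul_mem hh (inv_mem h0.2))⟩ : H)
      = h0 * ⟨h⁻¹, inv_mem hh⟩ := by
    ext; simp [mul_inv_rev]
  rw [hmm, map_mul, Module.End.mul_apply]

lemma mackeyHom_injective {D : Set G}
    (hD : ∀ x : G, ∃! d : G, d ∈ D ∧ ∃ k ∈ K, ∃ h ∈ H, x = k * d * h) :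
    Function.Injective (mackeyHom ρ (K := K) D) := by
  rw [injective_iff_map_eq_zero]
  intro f hf
  ext x
  obtain ⟨d, ⟨hd, k, hk, h, hh, heq⟩, -⟩ := hD x⁻¹
  have hx : x = (h⁻¹ : G) * (d⁻¹ * k⁻¹) := by
    have : x = (k * d * h)⁻¹ := by rw [← heq, inv_inv]
    rw [this]; group
  have h1 := f.2 ⟨h⁻¹, inv_mem hh⟩ (d⁻¹ * k⁻¹)
  have h2 : f.1 (d⁻¹ * k⁻¹) = 0 := by
    have := congrFun (congrArg (fun F => (F ⟨d, hd⟩).1) hf) ⟨k⁻¹, inv_mem hk⟩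
    simpa [mackeyHom] using this
  show f.1 x = 0
  rw [hx, h1, h2, map_zero]

lemma mackeyHom_surjective {D : Set G}
    (hD : ∀ x : G, ∃! d : G, d ∈ D ∧ ∃ k ∈ K, ∃ h ∈ H, x = k * d * h) :
    Function.Surjective (mackeyHom ρ (K := K) D) := by
  intro F
  refine ⟨⟨mackeyInvAux ρ hD F, mackeyInvAux_mem hD F⟩, ?_⟩
  funext d
  apply Subtype.ext
  funext κ
  show mackeyInvAux ρ hD F ((d : G)⁻¹ * ↑κ) = (F d).1 κ
  have heq : ((d : G)⁻¹ * (κ : G))⁻¹ = (κ : G)⁻¹ * (d : G) * 1 := by group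
  rw [mackeyInvAux_spec hD F _ (d : G) d.2 (inv_mem κ.2) (one_mem H) heq]
  have h1 : (⟨(1 : G)⁻¹, inv_mem (one_mem H)⟩ : H) = 1 := by ext; simp
  have h2 : (⟨((κ : G)⁻¹)⁻¹, inv_mem (inv_mem κ.2)⟩ : K) = κ := by ext; simp
  rw [h1, h2, map_one]
  rfl

end MackeyAux

/-- Mackey decomposition: for subgroups `H, K` of a finite group `G`, a representation
`ρ` of `H`, and a set `D` of representatives of the double cosets `K\G/H`, there is a
`K`-equivariant linear isomorphism
`Res_K Ind_H^G ρ ≅ ⊕_{d ∈ D} Ind_{K ∩ dHd⁻¹}^K (ᵈρ)`. -/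
theorem mackey_decomposition
    (G : Type*) [Group G] [Fintype G] (K H : Subgroup G)
    (V : Type*) [AddCommGroup V] [Module ℂ V] (ρ : Representation ℂ H V)
    (D : Set G)
    (hD : ∀ x : G, ∃! d : G, d ∈ D ∧ ∃ k ∈ K, ∃ h ∈ H, x = k * d * h) :
    ∃ e : ↥(indSubmodule G H ρ) ≃ₗ[ℂ] (Π d : D, ↥(indPiece G K H ρ (d : G))),
      ∀ (f f' : ↥(indSubmodule G H ρ)) (k : K),
        (f'.1 = fun x => f.1 (x * ↑k)) →
        ∀ (d : D) (x : K), ((e f') d).1 x = ((e f) d).1 (x * k) := by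
  refine ⟨LinearEquiv.ofBijective (mackeyHom ρ (K := K) D)
    (show Function.Bijective (mackeyHom ρ (K := K) D) from
      ⟨mackeyHom_injective hD, mackeyHom_surjective hD⟩), ?_⟩
  intro f f' k hf' d x
  simp only [LinearEquiv.ofBijective_apply]
  show f'.1 ((d : G)⁻¹ * ↑x) = f.1 ((d : G)⁻¹ * ↑(x * k))
  rw [hf']
  simp [mul_assoc]
end
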